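/- arXiv:1410.7171 — 3 statements merged into one kernel-verified Lean document; each statement's English description precedes it below -/
import Mathlib

section
/- For every u > 0 and every α ∈ [1/2, 1], u − (1 + α·u)·log(1 + u) ≤ −(α − 1/2)·u² / (1 + u/3). -/
/-!
The left-hand side minus the right-hand side is affine in `α`, so it suffices to check the
endpoints. At `α = 1/2` the inequality is the classical bound `2u / (2 + u) ≤ log (1 + u)`.
At `α = 1` it is the comparison `u² / (2 (1 + u/3)) ≤ (1 + u) log (1 + u) - u` between the
Bernstein and Bennett exponents, which follows from the rational lower bound
`u (6 + 5u) / (2 (3 + u) (1 + u)) ≤ log (1 + u)`: the difference of the two sides vanishes at `0`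
and has derivative `u³ / ((3 + u)² (1 + u)²)`.
-/

open Real Set

theorem hasDerivAt_log_one_add_sub_div {x : ℝ} (h₁ : 1 + x ≠ 0) (h₃ : 3 + x ≠ 0) :
    HasDerivAt (fun y ↦ log (1 + y) - y * (6 + 5 * y) / (2 * (3 + y) * (1 + y)))
      (x ^ 3 / ((3 + x) ^ 2 * (1 + x) ^ 2)) x := by
  have hlog : HasDerivAt (fun y ↦ log (1 + y)) (1 / (1 + x)) x := by
    simpa using ((hasDerivAt_id x).const_add 1).log h₁
  have hnum : HasDerivAt (fun y ↦ y * (6 + 5 * y)) (1 * (6 + 5 * x) + x * (5 * 1)) x :=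
    (hasDerivAt_id x).mul (((hasDerivAt_id x).const_mul 5).const_add 6)
  have hden : HasDerivAt (fun y ↦ 2 * (3 + y) * (1 + y)) (2 * 1 * (1 + x) + 2 * (3 + x) * 1) x :=
    (((hasDerivAt_id x).const_add 3).const_mul 2).mul ((hasDerivAt_id x).const_add 1)
  refine (hlog.sub (hnum.div hden (by simp [h₁, h₃]))).congr_deriv ?_
  field_simp
  ring

theorem mul_div_le_log_one_add {u : ℝ} (hu : 0 ≤ u) :
    u * (6 + 5 * u) / (2 * (3 + u) * (1 + u)) ≤ log (1 + u) := by
  let f : ℝ → ℝ := fun y ↦ log (1 + y) - y * (6 + 5 * y) / (2 * (3 + y) * (1 + y))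
  have hf : ∀ x ∈ Ici (0 : ℝ), HasDerivAt f (x ^ 3 / ((3 + x) ^ 2 * (1 + x) ^ 2)) x :=
    fun x (hx : 0 ≤ x) ↦ hasDerivAt_log_one_add_sub_div (by linarith) (by linarith)
  have hmono : MonotoneOn f (Ici 0) :=
    monotoneOn_of_hasDerivWithinAt_nonneg (convex_Ici 0)
      (fun x hx ↦ (hf x hx).continuousAt.continuousWithinAt)
      (fun x hx ↦ (hf x (interior_subset hx)).hasDerivWithinAt)
      (fun x hx ↦ by have : 0 ≤ x := interior_subset hx; positivity)
  simpa [f] using hmono self_mem_Ici hu hu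

theorem sq_div_le_one_add_mul_log_one_add_sub {u : ℝ} (hu : 0 ≤ u) :
    u ^ 2 / (2 * (1 + u / 3)) ≤ (1 + u) * log (1 + u) - u := by
  calc u ^ 2 / (2 * (1 + u / 3))
      = (1 + u) * (u * (6 + 5 * u) / (2 * (3 + u) * (1 + u))) - u := by
        field_simp
        ring
    _ ≤ (1 + u) * log (1 + u) - u :=
        sub_le_sub_right (mul_le_mul_of_nonneg_left (mul_div_le_log_one_add hu) (by linarith)) u

theorem stmt_1 (u α : ℝ) (hu : 0 < u) (hα : α ∈ Set.Icc (1/2 : ℝ) 1) :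
    u - (1 + α * u) * Real.log (1 + u) ≤ -(α - 1/2) * u ^ 2 / (1 + u / 3) := by
  obtain ⟨hα₁, hα₂⟩ := hα
  have h_half := le_log_one_add_of_nonneg hu.le
  rw [div_le_iff₀ (by linarith)] at h_half
  have h_one := sq_div_le_one_add_mul_log_one_add_sub hu.le
  rw [div_le_iff₀ (by linarith)] at h_one
  rw [le_div_iff₀ (by linarith)]
  have w_half : 0 ≤ (1 - α) * (3 + u) := mul_nonneg (by linarith) (by linarith)
  have w_one : 0 ≤ 2 * α - 1 := by linarith
  -- the endpoint cases `α = 1/2` and `α = 1` enter with weights `2 (1 - α)` and `2 α - 1`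
  linear_combination (1 / 3) * mul_le_mul_of_nonneg_left h_half w_half +
    (1 / 2) * mul_le_mul_of_nonneg_left h_one w_one
end

section
/- Let M be a finite multiset of real numbers, let X₁, …, Xₙ be a uniformly random sample of size n drawn from M without replacement, and let Y₁, …, Yₙ be i.i.d. uniform samples from M (with replacement). Then for every convex function f : ℝ → ℝ, E[f(X₁ + ⋯ + Xₙ)] ≤ E[f(Y₁ + ⋯ + Yₙ)]. -/
/-!
Write an i.i.d. sample `g : ι → α` as `π ∘ e ∘ r` with `e` an injective (without-replacement)
sample, `π` a relabelling of the population and `r : ι → ι`. Relabelling by a uniformly random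
permutation does not change either law, and averaging `∑ i, x (τ (r i))` over all permutations
`τ` of `ι` returns `∑ i, x i`; so Jensen's inequality bounds the without-replacement term by the
term for `g`, and averaging over `g` gives the theorem.
-/

open Finset Function Equiv
open scoped Nat

theorem exists_perm_comp_comp_eq {ι α : Type*} [Finite ι] {e : ι → α} (he : Injective e)
    (g : ι → α) : ∃ (π : Perm α) (r : ι → ι), π ∘ e ∘ r = g := by
  obtain ⟨π, hπ⟩ := Perm.exists_extending_pair (e ∘ Set.rangeSplitting g) Subtype.val
    (he.comp (Set.rangeSplitting_injective g)) Subtype.val_injective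
  exact ⟨π, Set.rangeSplitting g ∘ Set.rangeFactorization g, funext fun i => hπ _⟩

section

variable {ι α E : Type*} [Fintype ι] [Fintype α] [DecidableEq α] [AddCommMonoid E]

noncomputable def permSum (f : E → ℝ) (a : α → E) (h : ι → α) : ℝ :=
  ∑ σ : Perm α, f (∑ i, a (σ (h i)))

theorem permSum_perm_comp (f : E → ℝ) (a : α → E) (π : Perm α) (h : ι → α) :
    permSum f a (π ∘ h) = permSum f a h :=
  Equiv.sum_comp (Equiv.mulRight π) fun σ => f (∑ i, a (σ (h i)))

theorem sum_perm_apply_eq_sum_perm_apply [DecidableEq ι] (x : ι → E) (j k : ι) :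
    ∑ τ : Perm ι, x (τ j) = ∑ τ : Perm ι, x (τ k) := by
  rw [← Equiv.sum_comp (Equiv.mulRight (swap k j))]
  simp

theorem sum_perm_sum_comp [DecidableEq ι] (x : ι → E) (r : ι → ι) :
    ∑ τ : Perm ι, ∑ i, x (τ (r i)) = (Fintype.card ι)! • ∑ i, x i := by
  calc ∑ τ : Perm ι, ∑ i, x (τ (r i))
      = ∑ i, ∑ τ : Perm ι, x (τ i) := by
        rw [sum_comm]
        exact sum_congr rfl fun i _ => sum_perm_apply_eq_sum_perm_apply x (r i) i
    _ = ∑ _τ : Perm ι, ∑ i, x i := by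
        rw [sum_comm]
        exact sum_congr rfl fun τ _ => Equiv.sum_comp τ x
    _ = (Fintype.card ι)! • ∑ i, x i := by
        rw [sum_const, card_univ, Fintype.card_perm]

theorem sum_permSum [DecidableEq ι] (f : E → ℝ) (a : α → E) :
    ∑ g : ι → α, permSum f a g = (Fintype.card α)! * ∑ g : ι → α, f (∑ i, a (g i)) := by
  unfold permSum
  rw [sum_comm]
  calc ∑ σ : Perm α, ∑ g : ι → α, f (∑ i, a (σ (g i)))
      = ∑ _σ : Perm α, ∑ g : ι → α, f (∑ i, a (g i)) :=
        sum_congr rfl fun σ _ =>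
          Equiv.sum_comp ((Equiv.refl ι).arrowCongr σ) fun g => f (∑ i, a (g i))
    _ = _ := by rw [sum_const, card_univ, Fintype.card_perm, nsmul_eq_mul]

end

section

variable {ι α E : Type*} [Fintype ι] [Fintype α] [DecidableEq α] [AddCommGroup E]
  [Module ℝ E]

theorem ConvexOn.map_sum_le_sum_perm [DecidableEq ι] {f : E → ℝ} (hf : ConvexOn ℝ Set.univ f)
    (x : ι → E) (r : ι → ι) :
    f (∑ i, x i) ≤ ((Fintype.card ι)! : ℝ)⁻¹ * ∑ τ : Perm ι, f (∑ i, x (τ (r i))) := by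
  have hc : ((Fintype.card ι)! : ℝ) ≠ 0 := by positivity
  have hmean : ∑ i, x i = ∑ τ : Perm ι, ((Fintype.card ι)! : ℝ)⁻¹ • ∑ i, x (τ (r i)) := by
    rw [← smul_sum, sum_perm_sum_comp, ← Nat.cast_smul_eq_nsmul ℝ, smul_smul,
      inv_mul_cancel₀ hc, one_smul]
  rw [hmean, mul_sum]
  refine hf.map_sum_le (fun _ _ => by positivity) ?_ (fun _ _ => Set.mem_univ _)
  rw [sum_const, card_univ, Fintype.card_perm, nsmul_eq_mul, mul_inv_cancel₀ hc]

theorem permSum_le_permSum_comp {f : E → ℝ} (hf : ConvexOn ℝ Set.univ f) (a : α → E)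
    {e : ι → α} (he : Injective e) (r : ι → ι) :
    permSum f a e ≤ permSum f a (e ∘ r) := by
  classical
  have hc : ((Fintype.card ι)! : ℝ) ≠ 0 := by positivity
  have hshift : ∀ τ : Perm ι, permSum f a (e ∘ τ ∘ r) = permSum f a (e ∘ r) := by
    intro τ
    obtain ⟨π, hπ⟩ := Perm.exists_extending_pair e (e ∘ τ) he (he.comp τ.injective)
    rw [← permSum_perm_comp f a π (e ∘ r)]
    congr 1
    ext i
    exact (hπ (r i)).symm
  calc permSum f a e
      ≤ ∑ σ : Perm α, ((Fintype.card ι)! : ℝ)⁻¹ *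
          ∑ τ : Perm ι, f (∑ i, a (σ (e (τ (r i))))) :=
        sum_le_sum fun σ _ => hf.map_sum_le_sum_perm (fun i => a (σ (e i))) r
    _ = ((Fintype.card ι)! : ℝ)⁻¹ * ∑ τ : Perm ι, permSum f a (e ∘ τ ∘ r) := by
        rw [← mul_sum, sum_comm]
        rfl
    _ = permSum f a (e ∘ r) := by
        simp_rw [hshift, sum_const, card_univ, Fintype.card_perm, nsmul_eq_mul,
          inv_mul_cancel_left₀ hc]

theorem permSum_le_permSum_of_injective {f : E → ℝ} (hf : ConvexOn ℝ Set.univ f) (a : α → E)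
    {e : ι → α} (he : Injective e) (g : ι → α) :
    permSum f a e ≤ permSum f a g := by
  obtain ⟨π, r, rfl⟩ := exists_perm_comp_comp_eq he g
  rw [permSum_perm_comp]
  exact permSum_le_permSum_comp hf a he r

theorem hoeffding_reduction [DecidableEq ι] {f : E → ℝ} (hf : ConvexOn ℝ Set.univ f) (a : α → E)
    {e : ι → α} (he : Injective e) :
    permSum f a e / (Fintype.card α)! ≤
      (∑ g : ι → α, f (∑ i, a (g i))) / Fintype.card (ι → α) := by
  have : Nonempty (ι → α) := ⟨e⟩
  rw [div_le_div_iff₀ (by positivity) (by positivity), mul_comm _ ((Fintype.card α)! : ℝ),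
    ← sum_permSum, mul_comm]
  calc Fintype.card (ι → α) * permSum f a e = ∑ _g : ι → α, permSum f a e := by
        rw [sum_const, card_univ, nsmul_eq_mul]
    _ ≤ ∑ g : ι → α, permSum f a g :=
        sum_le_sum fun g _ => permSum_le_permSum_of_injective hf a he g

end

/-- Hoeffding's reduction theorem: for a finite multiset (enumerated by `a : Fin N → ℝ`),
the expectation of a convex function of the sum of `n` samples drawn uniformly without
replacement (the first `n` values of a uniformly random permutation) is at most the
expectation for `n` i.i.d. uniform samples (arbitrary functions `g : Fin n → Fin N`). -/
theorem stmt_7 (N n : ℕ) (hn : n ≤ N) (a : Fin N → ℝ) (f : ℝ → ℝ)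
    (hf : ConvexOn ℝ Set.univ f) :
    (∑ σ : Equiv.Perm (Fin N), f (∑ i : Fin n, a (σ (Fin.castLE hn i)))) / (Nat.factorial N : ℝ)
      ≤ (∑ g : Fin n → Fin N, f (∑ i : Fin n, a (g i))) / ((N : ℝ) ^ n) := by
  simpa [permSum] using hoeffding_reduction hf a (Fin.castLE_injective hn)
end

section
/- Let a₁, …, aₙ be nonnegative reals with each aᵢ ≤ γ·A where A = Σᵢ aᵢ > 0. Let σ be a uniformly random permutation of [n], let ε ∈ (0,1) with nε ∈ ℕ, h ≥ 0 with 2^h nε ≤ n, and θ = 2^{−(h+1)/2}ε^{1/2}. Then P(Σ_{t=1}^{2^h nε} a_{σ(t)} < 2^h ε(1−θ)·A) ≤ exp(−ε²/(4γ)). -/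
/-! Chernoff's method with `λ = θ / (γ A)`. For nonnegative weights `w`, the average over
permutations `σ` of `∏_{t ∈ s} w (σ t)` is at most `(mean w) ^ #s`: adding an index `p` to `s`
and comparing, through the transposition exchanging them, the factor `w (σ p)` with `w (σ q)` for
every other index `q` (AM-GM when `q ∈ s`) shows that the new factor contributes at most the mean.
This is Hoeffding's comparison of sampling without and with replacement. For `w = exp (-λ a)`,
`exp (-x) ≤ 1 - x + x² / 2` and `λ aᵢ ≤ θ` give `mean w ≤ exp (-(1 - θ/2) λ A / n)`, and the
Chernoff exponent `λ 2^h ε (1 - θ) A - 2^h ε (1 - θ/2) λ A` is `-2^h ε θ² / (2γ) = -ε² / (4γ)`. -/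

open MeasureTheory ProbabilityTheory Finset Real

section PermProd

variable {α : Type*} [Fintype α] [DecidableEq α] (w : α → ℝ)

theorem sum_perm_mul_prod_eq_of_notMem (f : α → ℝ) {s : Finset α} {p q : α}
    (hp : p ∉ s) (hq : q ∉ s) :
    ∑ σ : Equiv.Perm α, f (σ q) * ∏ t ∈ s, w (σ t)
      = ∑ σ : Equiv.Perm α, f (σ p) * ∏ t ∈ s, w (σ t) := by
  refine Fintype.sum_equiv (Equiv.mulRight (Equiv.swap q p)) _ _ fun σ => ?_
  have hfix : ∀ t ∈ s, Equiv.swap q p t = t := fun t ht =>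
    Equiv.swap_apply_of_ne_of_ne (ne_of_mem_of_not_mem ht hq) (ne_of_mem_of_not_mem ht hp)
  simp only [Equiv.coe_mulRight, Equiv.Perm.mul_apply, Equiv.swap_apply_right]
  congr 1
  exact prod_congr rfl fun t ht => by rw [hfix t ht]

theorem sum_perm_mul_prod_le_of_mem (hw : ∀ i, 0 ≤ w i) {s : Finset α} {p q : α}
    (hp : p ∉ s) (hq : q ∈ s) :
    ∑ σ : Equiv.Perm α, w (σ p) * ∏ t ∈ s, w (σ t)
      ≤ ∑ σ : Equiv.Perm α, w (σ q) * ∏ t ∈ s, w (σ t) := by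
  set rest : Equiv.Perm α → ℝ := fun σ => ∏ t ∈ s.erase q, w (σ t)
  have hsplit (σ : Equiv.Perm α) : ∏ t ∈ s, w (σ t) = w (σ q) * rest σ :=
    (mul_prod_erase s _ hq).symm
  have hswap : ∑ σ : Equiv.Perm α, w (σ q) ^ 2 * rest σ = ∑ σ : Equiv.Perm α, w (σ p) ^ 2 * rest σ :=
    sum_perm_mul_prod_eq_of_notMem w (w ^ 2) (fun h => hp (mem_of_mem_erase h))
      (notMem_erase q s)
  simp_rw [hsplit]
  -- AM-GM: `2 w(σ p) w(σ q) ≤ w(σ p)² + w(σ q)²`, and both squares have the same sum.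
  have hamgm : 2 * ∑ σ : Equiv.Perm α, w (σ p) * (w (σ q) * rest σ)
      ≤ ∑ σ : Equiv.Perm α, w (σ p) ^ 2 * rest σ + ∑ σ : Equiv.Perm α, w (σ q) ^ 2 * rest σ := by
    rw [mul_sum, ← sum_add_distrib]
    refine sum_le_sum fun σ _ => ?_
    have hrest : 0 ≤ rest σ := prod_nonneg fun t _ => hw _
    nlinarith [mul_nonneg (sq_nonneg (w (σ p) - w (σ q))) hrest]
  have hsq : ∑ σ : Equiv.Perm α, w (σ q) * (w (σ q) * rest σ)
      = ∑ σ : Equiv.Perm α, w (σ q) ^ 2 * rest σ :=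
    sum_congr rfl fun σ _ => by ring
  linarith

theorem card_mul_sum_perm_mul_prod_le (hw : ∀ i, 0 ≤ w i) {s : Finset α} {p : α} (hp : p ∉ s) :
    Fintype.card α * ∑ σ : Equiv.Perm α, w (σ p) * ∏ t ∈ s, w (σ t)
      ≤ (∑ i, w i) * ∑ σ : Equiv.Perm α, ∏ t ∈ s, w (σ t) := by
  calc Fintype.card α * ∑ σ : Equiv.Perm α, w (σ p) * ∏ t ∈ s, w (σ t)
      = ∑ _q : α, ∑ σ : Equiv.Perm α, w (σ p) * ∏ t ∈ s, w (σ t) := by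
        rw [sum_const, card_univ, nsmul_eq_mul]
    _ ≤ ∑ q : α, ∑ σ : Equiv.Perm α, w (σ q) * ∏ t ∈ s, w (σ t) := by
        refine sum_le_sum fun q _ => ?_
        by_cases hq : q ∈ s
        · exact sum_perm_mul_prod_le_of_mem w hw hp hq
        · exact (sum_perm_mul_prod_eq_of_notMem w w hp hq).ge
    _ = (∑ i, w i) * ∑ σ : Equiv.Perm α, ∏ t ∈ s, w (σ t) := by
        rw [sum_comm, mul_sum]
        refine sum_congr rfl fun σ _ => ?_
        rw [← sum_mul, Equiv.sum_comp σ w]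

theorem sum_perm_prod_le (hw : ∀ i, 0 ≤ w i) (s : Finset α) :
    ∑ σ : Equiv.Perm α, ∏ t ∈ s, w (σ t)
      ≤ (Fintype.card α).factorial * ((∑ i, w i) / Fintype.card α) ^ #s := by
  induction s using Finset.induction_on with
  | empty => simp [Fintype.card_perm]
  | insert p s hp ih =>
    have hcard : (0 : ℝ) < Fintype.card α := by
      exact_mod_cast Fintype.card_pos_iff.mpr ⟨p⟩
    have hmean : 0 ≤ (∑ i, w i) / Fintype.card α :=
      div_nonneg (sum_nonneg fun i _ => hw i) hcard.le
    calc ∑ σ : Equiv.Perm α, ∏ t ∈ insert p s, w (σ t)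
        = ∑ σ : Equiv.Perm α, w (σ p) * ∏ t ∈ s, w (σ t) := by simp_rw [prod_insert hp]
      _ ≤ (∑ i, w i) / Fintype.card α * ∑ σ : Equiv.Perm α, ∏ t ∈ s, w (σ t) := by
          rw [div_mul_eq_mul_div, le_div_iff₀ hcard, mul_comm]
          exact card_mul_sum_perm_mul_prod_le w hw hp
      _ ≤ (∑ i, w i) / Fintype.card α
            * ((Fintype.card α).factorial * ((∑ i, w i) / Fintype.card α) ^ #s) := by
          gcongr
      _ = (Fintype.card α).factorial * ((∑ i, w i) / Fintype.card α) ^ #(insert p s) := by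
          rw [card_insert_of_notMem hp]; ring

end PermProd

theorem mgf_uniformOfFintype {Ω : Type*} [Fintype Ω] [Nonempty Ω] [MeasurableSpace Ω]
    [MeasurableSingletonClass Ω] (X : Ω → ℝ) (t : ℝ) :
    mgf X (PMF.uniformOfFintype Ω).toMeasure t = (∑ x, exp (t * X x)) / Fintype.card Ω := by
  rw [mgf, PMF.integral_eq_sum, sum_div]
  refine sum_congr rfl fun x _ => ?_
  simp [PMF.uniformOfFintype_apply, div_eq_inv_mul]

theorem mgf_sum_perm_apply_le {α : Type*} [Fintype α] [DecidableEq α]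
    [MeasurableSpace (Equiv.Perm α)] [MeasurableSingletonClass (Equiv.Perm α)]
    (a : α → ℝ) (s : Finset α) (t : ℝ) :
    mgf (fun σ : Equiv.Perm α => ∑ i ∈ s, a (σ i)) (PMF.uniformOfFintype (Equiv.Perm α)).toMeasure t
      ≤ ((∑ i, exp (t * a i)) / Fintype.card α) ^ #s := by
  rw [mgf_uniformOfFintype, Fintype.card_perm, div_le_iff₀ (by positivity), mul_comm]
  simp_rw [mul_sum, exp_sum]
  exact sum_perm_prod_le (fun i => exp (t * a i)) (fun i => (exp_pos _).le) s

theorem Real.exp_neg_le_one_sub_add_sq_div_two {x : ℝ} (hx : 0 ≤ x) :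
    exp (-x) ≤ 1 - x + x ^ 2 / 2 := by
  rw [exp_neg, inv_le_iff_one_le_mul₀ (exp_pos x)]
  have hq : 0 < 1 - x + x ^ 2 / 2 := by nlinarith [sq_nonneg (x - 1)]
  -- `(1 + x + x²/2) (1 - x + x²/2) = 1 + x⁴/4`
  nlinarith [mul_le_mul_of_nonneg_right (quadratic_le_exp_of_nonneg hx) hq.le, sq_nonneg (x ^ 2)]

theorem sum_exp_neg_mul_div_card_le {ι : Type*} [Fintype ι] [Nonempty ι] {a : ι → ℝ}
    (ha : ∀ i, 0 ≤ a i) {t θ : ℝ} (ht : 0 ≤ t) (haθ : ∀ i, t * a i ≤ θ) :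
    (∑ i, exp (-t * a i)) / Fintype.card ι
      ≤ exp (-((1 - θ / 2) * t * ∑ i, a i) / Fintype.card ι) := by
  have hcard : (0 : ℝ) < Fintype.card ι := by exact_mod_cast Fintype.card_pos
  have hterm (i : ι) : exp (-t * a i) ≤ 1 - (1 - θ / 2) * t * a i := by
    have hx : 0 ≤ t * a i := mul_nonneg ht (ha i)
    have := Real.exp_neg_le_one_sub_add_sq_div_two hx
    rw [neg_mul]
    nlinarith [mul_le_mul_of_nonneg_left (haθ i) hx]
  calc (∑ i, exp (-t * a i)) / Fintype.card ι
      ≤ (∑ i, (1 - (1 - θ / 2) * t * a i)) / Fintype.card ι := by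
        gcongr with i; exact hterm i
    _ = 1 + -((1 - θ / 2) * t * ∑ i, a i) / Fintype.card ι := by
        rw [sum_sub_distrib, ← mul_sum]; simp only [sum_const, card_univ, nsmul_eq_mul, mul_one]
        field_simp
        ring
    _ ≤ exp (-((1 - θ / 2) * t * ∑ i, a i) / Fintype.card ι) := by
        rw [add_comm]; exact add_one_le_exp _

theorem mgf_sum_perm_apply_neg_le_exp {α : Type*} [Fintype α] [DecidableEq α] [Nonempty α]
    [MeasurableSpace (Equiv.Perm α)] [MeasurableSingletonClass (Equiv.Perm α)]
    {a : α → ℝ} (ha : ∀ i, 0 ≤ a i) {t θ : ℝ} (ht : 0 ≤ t) (haθ : ∀ i, t * a i ≤ θ)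
    (s : Finset α) :
    mgf (fun σ : Equiv.Perm α => ∑ i ∈ s, a (σ i)) (PMF.uniformOfFintype (Equiv.Perm α)).toMeasure
        (-t)
      ≤ exp (#s * (-((1 - θ / 2) * t * ∑ i, a i) / Fintype.card α)) := by
  rw [exp_nat_mul]
  exact (mgf_sum_perm_apply_le a s (-t)).trans
    (pow_le_pow_left₀ (by positivity) (sum_exp_neg_mul_div_card_le ha ht haθ) _)

theorem measure_lt_le_ofReal_exp_mul_mgf {Ω : Type*} [Finite Ω] [MeasurableSpace Ω]
    [MeasurableSingletonClass Ω] (μ : Measure Ω) [IsFiniteMeasure μ] (X : Ω → ℝ) (c : ℝ) {t : ℝ}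
    (ht : t ≤ 0) :
    μ {ω | X ω < c} ≤ ENNReal.ofReal (exp (-t * c) * mgf X μ t) :=
  calc μ {ω | X ω < c} ≤ μ {ω | X ω ≤ c} := measure_mono fun _ => le_of_lt (α := ℝ)
    _ = ENNReal.ofReal (μ.real {ω | X ω ≤ c}) := (ofReal_measureReal).symm
    _ ≤ ENNReal.ofReal (exp (-t * c) * mgf X μ t) :=
        ENNReal.ofReal_le_ofReal (measure_le_le_exp_mul_mgf c ht .of_finite)

theorem two_pow_mul_sq_rpow_neg_succ_div_two_mul_sqrt (h : ℕ) {ε : ℝ} (hε : 0 ≤ ε) :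
    (2 : ℝ) ^ h * ((2 : ℝ) ^ (-((h : ℝ) + 1) / 2) * √ε) ^ 2 = ε / 2 := by
  rw [mul_pow, sq_sqrt hε, ← rpow_natCast ((2 : ℝ) ^ _) 2, ← rpow_mul zero_le_two,
    ← rpow_natCast 2 h, ← mul_assoc, ← rpow_add zero_lt_two]
  norm_num [rpow_neg_one]
  ring

/-- Lower-tail concentration for a uniformly random prefix of size `2^h · nε` of fixed
nonnegative values `aᵢ ≤ γ·A` summing to `A > 0`:
`P(Σ_{t=1}^{2^h nε} a_{σ(t)} < 2^h ε (1-θ) A) ≤ exp(-ε²/(4γ))`, `θ = 2^{-(h+1)/2} √ε`. -/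
theorem stmt_18 (n : ℕ) (a : Fin n → ℝ) (ha : ∀ i, 0 ≤ a i)
    (A : ℝ) (hA : A = ∑ i, a i) (hApos : 0 < A)
    (γ : ℝ) (hγ : 0 < γ) (hbd : ∀ i, a i ≤ γ * A)
    (ε : ℝ) (hε : ε ∈ Set.Ioo (0:ℝ) 1)
    (nε : ℕ) (hnε : (nε : ℝ) = n * ε)
    (h : ℕ) (hhn : 2 ^ h * nε ≤ n)
    (θ : ℝ) (hθ : θ = (2 : ℝ) ^ (-((h : ℝ) + 1) / 2) * Real.sqrt ε)
    [m0 : MeasurableSpace (Equiv.Perm (Fin n))] (hm0 : m0 = ⊤)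
    (μ : Measure (Equiv.Perm (Fin n)))
    (hμ : μ = (PMF.uniformOfFintype (Equiv.Perm (Fin n))).toMeasure) :
    μ {σ | ∑ t ∈ Finset.univ.filter (fun t : Fin n => (t : ℕ) < 2 ^ h * nε), a (σ t)
            < 2 ^ h * ε * (1 - θ) * A}
      ≤ ENNReal.ofReal (Real.exp (-(ε ^ 2) / (4 * γ))) := by
  have : MeasurableSingletonClass (Equiv.Perm (Fin n)) :=
    ⟨fun _ => hm0 ▸ MeasurableSpace.measurableSet_top⟩
  have hn : 0 < n := Nat.pos_of_ne_zero fun hn0 => by subst hn0; simp [hA] at hApos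
  have : Nonempty (Fin n) := ⟨⟨0, hn⟩⟩
  have hs : #{t : Fin n | (t : ℕ) < 2 ^ h * nε} = 2 ^ h * nε := by
    rw [Fin.card_filter_val_lt, min_eq_right hhn]
  have hθ0 : 0 < θ := by rw [hθ]; have := sqrt_pos.mpr hε.1; positivity
  set l := θ / (γ * A)
  have hl : 0 ≤ l := by positivity
  have hmgf := mgf_sum_perm_apply_neg_le_exp ha hl (fun i =>
      (mul_le_mul_of_nonneg_left (hbd i) hl).trans_eq (div_mul_cancel₀ θ (by positivity)))
    {t : Fin n | (t : ℕ) < 2 ^ h * nε}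
  rw [← hA, ← hμ, hs, Fintype.card_fin] at hmgf
  have hexponent : -(-l) * (2 ^ h * ε * (1 - θ) * A)
      + ↑(2 ^ h * nε) * (-((1 - θ / 2) * l * A) / n) = -(ε ^ 2) / (4 * γ) := by
    have h2θ := two_pow_mul_sq_rpow_neg_succ_div_two_mul_sqrt h hε.1.le
    rw [← hθ] at h2θ
    push_cast [hnε]
    simp only [l]
    field_simp
    linear_combination (-4 * ε) * h2θ
  have : IsProbabilityMeasure μ := by rw [hμ]; infer_instance
  refine (measure_lt_le_ofReal_exp_mul_mgf μ _ _ (neg_nonpos.mpr hl)).trans ?_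
  rw [← hexponent, exp_add]
  gcongr
end
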